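/- arXiv:2512.22115 — 2 statements merged into one kernel-verified Lean document; each statement's English description precedes it below -/
import Mathlib

section
/- Let g > 0, κ ≥ 0, γ ∈ ℝ, h ∈ (0,∞), and let j be a nonzero integer. Set G̃(j) := j·tanh(h·j), Ω(j) := √( G̃(j)·( g + κ·j² + (γ²/4)·G̃(j)/j² ) ) + (γ/2)·G̃(j)/j, and M(j) := ( G̃(j) / ( g + κ·j² + (γ²/4)·G̃(j)/j² ) )^{1/4} (the denominator is strictly positive since g > 0 and G̃(j) ≥ 0). Then the row vector ℓ_j := ( M(j)^{-1} − γ·M(j)/(2j) , i·M(j) ) is a left eigenvector of the matrix A_j := [[0, G̃(j)], [−(g + κ·j²), −i·γ·G̃(j)/j]] with eigenvalue −i·Ω(j), i.e. ℓ_j·A_j = −i·Ω(j)·ℓ_j. Consequently, for any solution (η_j(t), ψ_j(t)) of the linear ODE system (η̇_j, ψ̇_j)ᵀ = A_j(η_j, ψ_j)ᵀ, the complex variable u_j(t) := (1/√2)·( (M(j)^{-1} − γ·M(j)/(2j))·η_j(t) + i·M(j)·ψ_j(t) ) satisfies u̇_j = −i·Ω(j)·u_j. -/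
/-- `G̃(j) = j tanh(h j)`, the symbol of the Dirichlet-Neumann operator at the flat state. -/
noncomputable def Gtilde (h : ℝ) (j : ℤ) : ℝ := (j : ℝ) * Real.tanh (h * j)

/-- The linear normal mode frequencies of the water waves equations with gravity `g`,
surface tension `κ`, constant vorticity `γ` and depth `h`. -/
noncomputable def Omega (g κ γ h : ℝ) (j : ℤ) : ℝ :=
  Real.sqrt (Gtilde h j * (g + κ * (j : ℝ) ^ 2 + γ ^ 2 / 4 * Gtilde h j / (j : ℝ) ^ 2))
    + γ / 2 * Gtilde h j / (j : ℝ)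

/-- The symbol `M(j) = ( G̃(j) / (g + κ j² + (γ²/4) G̃(j)/j²) )^{1/4}`. -/
noncomputable def Msymb (g κ γ h : ℝ) (j : ℤ) : ℝ :=
  (Gtilde h j / (g + κ * (j : ℝ) ^ 2 + γ ^ 2 / 4 * Gtilde h j / (j : ℝ) ^ 2)) ^ ((1 : ℝ) / 4)

/-- The `j`-th Fourier block of the linearized water waves equations at the flat equilibrium. -/
noncomputable def Amat (g κ γ h : ℝ) (j : ℤ) : Matrix (Fin 2) (Fin 2) ℂ :=
  !![0, ((Gtilde h j : ℝ) : ℂ);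
     -(((g + κ * (j : ℝ) ^ 2 : ℝ)) : ℂ),
     -Complex.I * ((γ * Gtilde h j / (j : ℝ) : ℝ) : ℂ)]

/-- The row vector `ℓ_j = ( M(j)⁻¹ − γ M(j)/(2j) , i M(j) )`. -/
noncomputable def lvec (g κ γ h : ℝ) (j : ℤ) : Fin 2 → ℂ :=
  ![(((Msymb g κ γ h j)⁻¹ - γ * Msymb g κ γ h j / (2 * (j : ℝ)) : ℝ) : ℂ),
    Complex.I * ((Msymb g κ γ h j : ℝ) : ℂ)]

/-!
Put `c = γ/(2j)`, `K = g + κj²`, `D = K + c²G̃(j)` and `ω₀ = √(G̃(j) D)`, so that `Ω(j) = ω₀ + c G̃(j)`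
and `A_j = [[0, G̃], [-K, -2icG̃]]`. The quartic root `M = (G̃/D)^{1/4}` satisfies `M² D = ω₀` and
`ω₀ M² = G̃`, and these two relations turn both entries of `ℓ_j A_j = -iΩ ℓ_j` into polynomial
identities. Along a solution, `d/dt (ℓ_j · (η, ψ)) = (ℓ_j A_j) · (η, ψ) = -iΩ ℓ_j · (η, ψ)`.
-/

open Complex Matrix

lemma Real.mul_tanh_self_pos {x : ℝ} (hx : x ≠ 0) : 0 < x * Real.tanh x := by
  rw [Real.tanh_eq_sinh_div_cosh, ← mul_div_assoc]
  refine div_pos ?_ (Real.cosh_pos x)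
  rcases hx.lt_or_gt with hneg | hpos
  · exact mul_pos_of_neg_of_neg hneg (Real.sinh_neg_iff.2 hneg)
  · exact mul_pos hpos (Real.sinh_pos_iff.2 hpos)

lemma Gtilde_pos {h : ℝ} (hh : 0 < h) {j : ℤ} (hj : j ≠ 0) : 0 < Gtilde h j := by
  refine (mul_pos_iff_of_pos_left hh).1 ?_
  rw [Gtilde, ← mul_assoc]
  exact Real.mul_tanh_self_pos (mul_ne_zero hh.ne' (Int.cast_ne_zero.2 hj))

lemma Real.rpow_one_div_four_sq {x : ℝ} (hx : 0 ≤ x) : (x ^ (1 / 4 : ℝ)) ^ 2 = √x := by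
  rw [← Real.rpow_natCast, ← Real.rpow_mul hx, Real.sqrt_eq_rpow]
  norm_num

lemma rpow_one_div_four_div_sq_mul {G D : ℝ} (hG : 0 ≤ G) (hD : 0 < D) :
    ((G / D) ^ (1 / 4 : ℝ)) ^ 2 * D = √(G * D) := by
  rw [Real.rpow_one_div_four_sq (div_nonneg hG hD.le), Real.sqrt_div' _ hD.le,
    Real.sqrt_mul hG, div_mul_eq_mul_div, div_eq_iff (Real.sqrt_pos.2 hD).ne', mul_assoc,
    Real.mul_self_sqrt hD.le]

lemma sqrt_mul_mul_rpow_one_div_four_div_sq {G D : ℝ} (hG : 0 ≤ G) (hD : 0 < D) :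
    √(G * D) * ((G / D) ^ (1 / 4 : ℝ)) ^ 2 = G := by
  rw [Real.rpow_one_div_four_sq (div_nonneg hG hD.le), ← Real.sqrt_mul (mul_nonneg hG hD.le),
    mul_div_assoc', mul_comm G D, mul_assoc, mul_div_cancel_left₀ _ hD.ne', Real.sqrt_mul_self hG]

theorem Matrix.vecMul_vec2_fin_two {α : Type*} [CommSemiring α] (x y a b c d : α) :
    vecMul ![x, y] !![a, b; c, d] = ![x * a + y * c, x * b + y * d] := by
  ext i
  fin_cases i <;> simp [vecMul]

theorem vecMul_waterWaveBlock_eq_smul {G K c m ω : ℝ} (hm : m ≠ 0)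
    (hmD : m ^ 2 * (K + c ^ 2 * G) = ω) (hmG : ω * m ^ 2 = G) :
    vecMul ![((m⁻¹ - c * m : ℝ) : ℂ), I * m] !![0, (G : ℂ); -(K : ℂ), -I * ((2 * c * G : ℝ) : ℂ)]
      = (-I * ((ω + c * G : ℝ) : ℂ)) • ![((m⁻¹ - c * m : ℝ) : ℂ), I * m] := by
  have col₀ : m * K = (ω + c * G) * (m⁻¹ - c * m) := by
    field_simp
    linear_combination hmD + c * hmG
  have col₁ : (m⁻¹ - c * m) * G + m * (2 * c * G) = (ω + c * G) * m := by
    field_simp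
    linear_combination -hmG
  replace col₀ := congrArg ofReal col₀
  replace col₁ := congrArg ofReal col₁
  push_cast at col₀ col₁ ⊢
  rw [vecMul_vec2_fin_two, smul_vec2]
  refine congrArg₂ (fun a b => ![a, b]) ?_ ?_
  · linear_combination -I * col₀
  · linear_combination col₁ + m * (ω - c * G) * I_sq

theorem hasDerivAt_vec2_pairing_of_vecMul_eq_smul {𝕜 𝔸 : Type*} [NontriviallyNormedField 𝕜]
    [NormedCommRing 𝔸] [NormedAlgebra 𝕜 𝔸] {ℓ : Fin 2 → 𝔸} {A : Matrix (Fin 2) (Fin 2) 𝔸}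
    {μ : 𝔸} (hℓ : vecMul ℓ A = μ • ℓ) {η ψ : 𝕜 → 𝔸} {t : 𝕜}
    (hη : HasDerivAt η (A 0 0 * η t + A 0 1 * ψ t) t)
    (hψ : HasDerivAt ψ (A 1 0 * η t + A 1 1 * ψ t) t) :
    HasDerivAt (fun s => ℓ 0 * η s + ℓ 1 * ψ s) (μ * (ℓ 0 * η t + ℓ 1 * ψ t)) t := by
  have col₀ := congrFun hℓ 0
  have col₁ := congrFun hℓ 1
  simp only [vecMul, dotProduct, Fin.sum_univ_two, Pi.smul_apply, smul_eq_mul] at col₀ col₁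
  refine ((hη.const_mul (ℓ 0)).add (hψ.const_mul (ℓ 1))).congr_deriv ?_
  linear_combination η t * col₀ + ψ t * col₁

/-- `ℓ_j` is a left eigenvector of `A_j` with eigenvalue `−i Ω(j)`; consequently, for any
solution of the linear ODE system given by `A_j`, the complex variable
`u_j = (1/√2)( (M(j)⁻¹ − γM(j)/(2j)) η_j + i M(j) ψ_j )` solves `u̇_j = −i Ω(j) u_j`. -/
theorem stmt1 (g κ γ h : ℝ) (hg : 0 < g) (hκ : 0 ≤ κ) (hh : 0 < h) (j : ℤ) (hj : j ≠ 0) :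
    Matrix.vecMul (lvec g κ γ h j) (Amat g κ γ h j)
      = (-Complex.I * ((Omega g κ γ h j : ℝ) : ℂ)) • lvec g κ γ h j ∧
    ∀ η ψ : ℝ → ℂ,
      (∀ t, HasDerivAt η (Amat g κ γ h j 0 0 * η t + Amat g κ γ h j 0 1 * ψ t) t) →
      (∀ t, HasDerivAt ψ (Amat g κ γ h j 1 0 * η t + Amat g κ γ h j 1 1 * ψ t) t) →
      ∀ t, HasDerivAt
        (fun s => ((1 / Real.sqrt 2 : ℝ) : ℂ) * (lvec g κ γ h j 0 * η s + lvec g κ γ h j 1 * ψ s))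
        (-Complex.I * ((Omega g κ γ h j : ℝ) : ℂ) *
          (((1 / Real.sqrt 2 : ℝ) : ℂ) * (lvec g κ γ h j 0 * η t + lvec g κ γ h j 1 * ψ t))) t := by
  set G := Gtilde h j
  set K := g + κ * (j : ℝ) ^ 2
  set c := γ / (2 * (j : ℝ))
  set m := Msymb g κ γ h j
  have hG : 0 < G := Gtilde_pos hh hj
  have hD : 0 < K + c ^ 2 * G := by positivity
  have hDdef : g + κ * (j : ℝ) ^ 2 + γ ^ 2 / 4 * G / (j : ℝ) ^ 2 = K + c ^ 2 * G := by ring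
  have hm : m = (G / (K + c ^ 2 * G)) ^ (1 / 4 : ℝ) := by rw [← hDdef]; rfl
  have hA : Amat g κ γ h j = !![0, (G : ℂ); -(K : ℂ), -I * ((2 * c * G : ℝ) : ℂ)] := by
    rw [Amat, show γ * G / j = 2 * c * G by ring]
  have hℓ : lvec g κ γ h j = ![((m⁻¹ - c * m : ℝ) : ℂ), I * m] := by
    rw [lvec]
    congr 3
    ring
  have hΩ : Omega g κ γ h j = √(G * (K + c ^ 2 * G)) + c * G := by
    rw [Omega, hDdef]
    ring
  have heig : vecMul (lvec g κ γ h j) (Amat g κ γ h j)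
      = (-I * ((Omega g κ γ h j : ℝ) : ℂ)) • lvec g κ γ h j := by
    rw [hA, hℓ, hΩ]
    refine vecMul_waterWaveBlock_eq_smul ?_ ?_ ?_
    · exact hm ▸ (Real.rpow_pos_of_pos (div_pos hG hD) _).ne'
    · exact hm ▸ rpow_one_div_four_div_sq_mul hG.le hD
    · exact hm ▸ sqrt_mul_mul_rpow_one_div_four_div_sq hG.le hD
  refine ⟨heig, fun η ψ hη hψ t => ?_⟩
  simpa only [mul_left_comm] using
    ((hasDerivAt_vec2_pairing_of_vecMul_eq_smul heig (hη t) (hψ t)).const_mul ((1 / √2 : ℝ) : ℂ))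
end

section
/- Let h > 0, c_h := √(tanh h), and let p ≥ 2 be an integer. Then there exists a unique ψ > 0 such that √( (ψ+p)·tanh(h·(ψ+p)) ) + √( ψ·tanh(h·ψ) ) = p·c_h. Equivalently, with ω^σ(φ,h) := c_h·φ − σ·√(φ·tanh(h·φ)) for σ = ±1, there is a unique ψ > 0 with ω^{+1}(ψ + p, h) = ω^{−1}(ψ, h). -/
/-!
`ψ ↦ √((ψ+p) tanh(h(ψ+p))) + √(ψ tanh(hψ))` is continuous and strictly increasing on `[0, ∞)`,
so the claim follows from the intermediate value theorem once the right-hand side `p √(tanh h)`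
is bracketed. At `ψ = 0` the left-hand side is `√(p tanh(hp)) < p √(tanh h)`, by strict
subadditivity of `tanh` on `(0, ∞)` (this is where `p ≥ 2` enters); at `ψ = p²` its second
summand alone is at least `√(p² tanh h)`.
-/

open Real Set

namespace Real

theorem strictMono_tanh : StrictMono tanh := fun a b hab =>
  lt_of_not_ge fun hba => hab.not_ge <| by
    simpa only [artanh_tanh] using artanh_le_artanh (neg_one_lt_tanh b) (tanh_lt_one a) hba

theorem tanh_nonneg {x : ℝ} (hx : 0 ≤ x) : 0 ≤ tanh x := by
  simpa only [tanh_zero] using strictMono_tanh.monotone hx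

theorem continuous_tanh : Continuous tanh := by
  simp only [funext tanh_eq_sinh_div_cosh]
  exact continuous_sinh.div continuous_cosh fun x => (cosh_pos x).ne'

theorem tanh_add_lt_add {a b : ℝ} (ha : 0 < a) (hb : 0 < b) : tanh (a + b) < tanh a + tanh b := by
  have hca := cosh_pos a
  have hcb := cosh_pos b
  have hsa := sinh_pos_iff.2 ha
  have hsb := sinh_pos_iff.2 hb
  rw [tanh_eq_sinh_div_cosh, tanh_eq_sinh_div_cosh, tanh_eq_sinh_div_cosh, sinh_add, cosh_add,
    div_add_div _ _ hca.ne' hcb.ne', div_lt_div_iff₀ (by positivity) (by positivity)]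
  nlinarith [mul_pos (add_pos (mul_pos hsa hcb) (mul_pos hca hsb)) (mul_pos hsa hsb)]

theorem tanh_nat_mul_lt {n : ℕ} (hn : 2 ≤ n) {x : ℝ} (hx : 0 < x) : tanh (n * x) < n * tanh x := by
  induction n, hn using Nat.le_induction with
  | base => simpa [two_mul] using tanh_add_lt_add hx hx
  | succ n _ ih =>
    have hnx : 0 < (n : ℝ) * x := by positivity
    calc tanh ((n + 1 : ℕ) * x) = tanh (n * x + x) := by push_cast; ring_nf
      _ < tanh (n * x) + tanh x := tanh_add_lt_add hnx hx
      _ < n * tanh x + tanh x := by linarith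
      _ = (n + 1 : ℕ) * tanh x := by push_cast; ring

end Real

/-- The dispersive part `√(φ tanh(hφ))` of the eigenvalues `ω^σ(φ, h) = c_h φ - σ √(φ tanh(hφ))`. -/
noncomputable def dispersion (h φ : ℝ) : ℝ := √(φ * tanh (h * φ))

theorem continuous_dispersion (h : ℝ) : Continuous (dispersion h) :=
  (continuous_id.mul (continuous_tanh.comp (continuous_const_mul h))).sqrt

section Dispersion

variable {h : ℝ}

theorem strictMonoOn_dispersion (hh : 0 < h) : StrictMonoOn (dispersion h) (Ici 0) := by
  intro a ha b _ hab
  have hta : 0 ≤ tanh (h * a) := tanh_nonneg (mul_nonneg hh.le ha)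
  have htab : tanh (h * a) < tanh (h * b) := strictMono_tanh (mul_lt_mul_of_pos_left hab hh)
  exact sqrt_lt_sqrt (mul_nonneg ha hta) (by nlinarith [mem_Ici.1 ha])

theorem dispersion_natCast_lt {p : ℕ} (hp : 2 ≤ p) (hh : 0 < h) : dispersion h p < p * √(tanh h) := by
  have hp0 : (0 : ℝ) < p := by positivity
  rw [dispersion, show (p : ℝ) * √(tanh h) = √(p ^ 2 * tanh h) by
    rw [sqrt_mul (sq_nonneg _), sqrt_sq hp0.le]]
  refine sqrt_lt_sqrt (mul_nonneg hp0.le (tanh_nonneg (by positivity))) ?_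
  have := tanh_nat_mul_lt hp hh
  rw [mul_comm h]
  nlinarith

theorem sqrt_mul_sqrt_tanh_le_dispersion (hh : 0 ≤ h) {x : ℝ} (hx : 1 ≤ x) :
    √x * √(tanh h) ≤ dispersion h x := by
  rw [dispersion, ← sqrt_mul (by linarith)]
  refine sqrt_le_sqrt (mul_le_mul_of_nonneg_left ?_ (by linarith))
  exact strictMono_tanh.monotone (le_mul_of_one_le_right hh hx)

end Dispersion

theorem existsUnique_pos_eq_of_strictMonoOn {f : ℝ → ℝ} {b c : ℝ} (hf : Continuous f)
    (hmono : StrictMonoOn f (Ici 0)) (hb : 0 ≤ b) (hc0 : f 0 < c) (hcb : c ≤ f b) :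
    ∃! x, 0 < x ∧ f x = c := by
  obtain ⟨x, hx, hfx⟩ := intermediate_value_Icc hb hf.continuousOn ⟨hc0.le, hcb⟩
  have hx0 : 0 < x := hx.1.lt_of_ne fun h0 => hc0.ne (h0 ▸ hfx)
  refine ⟨x, ⟨hx0, hfx⟩, fun y ⟨hy0, hfy⟩ => ?_⟩
  exact hmono.injOn (mem_Ici.2 hy0.le) (mem_Ici.2 hx0.le) (hfy.trans hfx.symm)

/-- For every depth `h > 0` and every integer `p ≥ 2` there is a unique `ψ > 0` at which the
two eigenvalue curves `ω^{+1}(ψ+p,h)` and `ω^{−1}(ψ,h)` of the Bloch-Floquet operator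
collide, i.e. `√((ψ+p)tanh(h(ψ+p))) + √(ψ tanh(hψ)) = p c_h` with `c_h = √tanh h`. -/
theorem stmt11 (h : ℝ) (hh : 0 < h) (p : ℕ) (hp : 2 ≤ p) :
    ∃! ψ : ℝ, 0 < ψ ∧
      Real.sqrt ((ψ + p) * Real.tanh (h * (ψ + p))) + Real.sqrt (ψ * Real.tanh (h * ψ))
        = p * Real.sqrt (Real.tanh h) := by
  have hmono : StrictMonoOn (fun ψ => dispersion h (ψ + p) + dispersion h ψ) (Ici 0) :=
    fun a ha b hb hab => add_lt_add
      (strictMonoOn_dispersion hh (mem_Ici.2 (add_nonneg ha p.cast_nonneg))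
        (mem_Ici.2 (add_nonneg hb p.cast_nonneg))
        (by linarith))
      (strictMonoOn_dispersion hh ha hb hab)
  have hcont : Continuous fun ψ => dispersion h (ψ + p) + dispersion h ψ :=
    ((continuous_dispersion h).comp (continuous_add_const _)).add (continuous_dispersion h)
  have hc0 : dispersion h (0 + p) + dispersion h 0 < p * √(tanh h) := by
    simpa [dispersion] using dispersion_natCast_lt hp hh
  have hcb : (p : ℝ) * √(tanh h) ≤ dispersion h ((p : ℝ) ^ 2 + p) + dispersion h ((p : ℝ) ^ 2) := by
    have hp1 : (1 : ℝ) ≤ (p : ℝ) ^ 2 := one_le_pow₀ (by exact_mod_cast (by omega : 1 ≤ p))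
    have := sqrt_mul_sqrt_tanh_le_dispersion hh.le hp1
    rw [sqrt_sq (Nat.cast_nonneg p)] at this
    have hnonneg : 0 ≤ dispersion h ((p : ℝ) ^ 2 + p) := sqrt_nonneg _
    linarith
  exact existsUnique_pos_eq_of_strictMonoOn hcont hmono (sq_nonneg (p : ℝ)) hc0 hcb
end
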